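/- Let 𝒯 = (𝒳, π, 𝒮) be a hypergraph transformation. Then for every distinguished hypergraph S ∈ 𝒮, the set 𝒮_S (the subset of 𝒟_S consisting of those T with V(π(T)) ∩ V(S ⊖ T) = ∅) equals {S}. -/

import Mathlib

open Classical

universe u

/-- A (finite) hypergraph over a vertex universe `V`: a finite vertex set together with a
finite set of nonempty hyperedges, each a subset of the vertex set. -/
structure FinHypergraph (V : Type u) where
  verts : Set V
  edges : Set (Set V)
  verts_finite : verts.Finite
  edges_finite : edges.Finite
  edge_sub : ∀ e ∈ edges, e ⊆ verts
  edge_nonempty : ∀ e ∈ edges, e.Nonempty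

namespace FinHypergraph

variable {V : Type u}

/-- The null hypergraph `𝒩`. -/
def Null : FinHypergraph V :=
  ⟨∅, ∅, Set.finite_empty, Set.finite_empty, by simp, by simp⟩

/-- Direct sum (hypergraph union) of two hypergraphs. -/
def dSum (X Y : FinHypergraph V) : FinHypergraph V where
  verts := X.verts ∪ Y.verts
  edges := X.edges ∪ Y.edges
  verts_finite := X.verts_finite.union Y.verts_finite
  edges_finite := X.edges_finite.union Y.edges_finite
  edge_sub := by
    rintro e (he | he)
    · exact (X.edge_sub e he).trans Set.subset_union_left
    · exact (Y.edge_sub e he).trans Set.subset_union_right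
  edge_nonempty := by
    rintro e (he | he)
    · exact X.edge_nonempty e he
    · exact Y.edge_nonempty e he

/-- Direct sum of a set of (pairwise disjoint) hypergraphs; the null hypergraph when the
unions fail to be finite.  The direct sum of the empty set is the null hypergraph. -/
noncomputable def bigSum (A : Set (FinHypergraph V)) : FinHypergraph V :=
  if h : (⋃ X ∈ A, X.verts).Finite ∧ (⋃ X ∈ A, X.edges).Finite then
    { verts := ⋃ X ∈ A, X.verts
      edges := ⋃ X ∈ A, X.edges
      verts_finite := h.1
      edges_finite := h.2
      edge_sub := by
        intro e he
        simp only [Set.mem_iUnion] at he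
        obtain ⟨X, hX, heX⟩ := he
        intro v hv
        simp only [Set.mem_iUnion]
        exact ⟨X, hX, X.edge_sub e heX hv⟩
      edge_nonempty := by
        intro e he
        simp only [Set.mem_iUnion] at he
        obtain ⟨X, hX, heX⟩ := he
        exact X.edge_nonempty e heX }
  else Null

/-- The direct difference `X ⊖ Z`: the unique hypergraph `W` vertex disjoint from `Z`
with `X = W ⊕ Z`, when it exists. -/
noncomputable def dDiff (X Z : FinHypergraph V) : FinHypergraph V :=
  if h : ∃ W : FinHypergraph V, Disjoint W.verts Z.verts ∧ X = dSum W Z then h.choose else X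

/-- Two vertices are connected in `X` if there is a walk between them. -/
def Connected (X : FinHypergraph V) (a b : V) : Prop :=
  a ∈ X.verts ∧ Relation.ReflTransGen (fun u w => ∃ e ∈ X.edges, u ∈ e ∧ w ∈ e) a b

/-- `C` is a connected component of `X`: its vertex set is a connectivity class of `X`
and its edges are the edges of `X` lying inside it. -/
def IsComponent (X C : FinHypergraph V) : Prop :=
  (∃ v ∈ X.verts, C.verts = {w | Connected X v w}) ∧
  C.edges = {e ∈ X.edges | e ⊆ C.verts}

/-- The set `𝒞(X)` of connected components of `X`. -/
def comps (X : FinHypergraph V) : Set (FinHypergraph V) := {C | IsComponent X C}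

/-- Component disjointness: `𝒞(X) ∩ 𝒞(Y) = ∅`. -/
def CompDisjoint (X Y : FinHypergraph V) : Prop := comps X ∩ comps Y = ∅

/-- `X ∧ H`: the union (direct sum) of the components of `X` meeting some hyperedge in `H`. -/
noncomputable def wedge (X : FinHypergraph V) (H : Set (Set V)) : FinHypergraph V :=
  bigSum {C ∈ comps X | ∃ f ∈ H, (f ∩ C.verts).Nonempty}

/-- `𝒮` is component maximal in `𝒳` with `𝒮`-maximal subsets given by `D`. -/
def IsMaximalSubsets (dom S : Set (FinHypergraph V))
    (D : FinHypergraph V → Set (FinHypergraph V)) : Prop :=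
  ∀ X ∈ dom,
    D X ⊆ S ∧
    (D X).Pairwise CompDisjoint ∧
    (Null ∈ S → Null ∈ D X) ∧
    (∀ T ∈ D X, comps T ⊆ comps X) ∧
    (∀ s ∈ S, comps s ⊆ comps X → ∃ T ∈ D X, comps s ⊆ comps T)

/-- `𝒮_X := { S ∈ 𝒟_X | V(π(S)) ∩ V(X ⊖ S) = ∅ }`. -/
noncomputable def SXof (π : FinHypergraph V → FinHypergraph V)
    (D : FinHypergraph V → Set (FinHypergraph V)) (X : FinHypergraph V) : Set (FinHypergraph V) :=
  {s ∈ D X | Disjoint (π s).verts (dDiff X s).verts}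

/-- `(𝒳, π, 𝒮)` (with `𝒮`-maximal subsets `D`) is a hypergraph transformation:
nonredundancy, component maximality, and preservation of the direct sum decomposition. -/
def IsHGT (dom : Set (FinHypergraph V)) (π : FinHypergraph V → FinHypergraph V)
    (S : Set (FinHypergraph V)) (D : FinHypergraph V → Set (FinHypergraph V)) : Prop :=
  (∀ s ∈ S, comps s ∩ comps (π s) = ∅) ∧
  (Null ∈ S → π Null ≠ Null) ∧
  IsMaximalSubsets dom S D ∧
  ∀ X ∈ dom,
    (π '' SXof π D X).Pairwise (fun A B => Disjoint A.verts B.verts) ∧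
    Set.InjOn π (SXof π D X) ∧
    π X = dSum (dDiff X (bigSum (SXof π D X))) (bigSum (π '' SXof π D X))

/-- `𝒮'` is upward closed with respect to `𝒮`. -/
def UpwardClosed (S' S : Set (FinHypergraph V)) : Prop :=
  ∀ s ∈ S', ∀ t ∈ S, comps s ⊆ comps t → t ∈ S'

end FinHypergraph

/-
A distinguished `s ∈ 𝒮` lies in its own maximal family `𝒟_s`, since a hypergraph is
determined by its components, and `s ⊖ s` is empty, so `s ∈ 𝒮_s`. Any other member of `𝒟_s`
is component-disjoint from `s` yet has its components among those of `s`, so it is the null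
hypergraph `𝒩`. If `𝒩 ∈ 𝒮_s`, then `π(s) = ⋯ ⊕ π(s) ⊕ π(𝒩)` puts the vertices of `π(𝒩)`
inside `π(s)`, while `π(s)` and `π(𝒩)` are vertex disjoint; so `π(𝒩) = 𝒩`, against
nonredundancy.
-/

namespace FinHypergraph

variable {V : Type u} {X Y Z : FinHypergraph V}

theorem ext (hv : X.verts = Y.verts) (he : X.edges = Y.edges) : X = Y := by
  cases X; cases Y; simp_all

theorem edges_eq_empty_of_verts_eq_empty (h : X.verts = ∅) : X.edges = ∅ :=
  Set.eq_empty_of_forall_notMem fun e he => by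
    obtain ⟨_, hv⟩ := X.edge_nonempty e he
    simpa [h] using X.edge_sub e he hv

theorem eq_null_of_verts_eq_empty (h : X.verts = ∅) : X = Null :=
  ext h (edges_eq_empty_of_verts_eq_empty h)

theorem dSum_null_left : dSum Null X = X :=
  ext (Set.empty_union _) (Set.empty_union _)

theorem Connected.mem_verts {a b : V} (h : Connected X a b) : b ∈ X.verts := by
  obtain ⟨ha, hr⟩ := h
  induction hr with
  | refl => exact ha
  | tail _ hstep _ =>
    obtain ⟨e, he, _, hbe⟩ := hstep
    exact X.edge_sub e he hbe

def compOf (X : FinHypergraph V) (v : V) : FinHypergraph V where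
  verts := {w | Connected X v w}
  edges := {e ∈ X.edges | e ⊆ {w | Connected X v w}}
  verts_finite := X.verts_finite.subset fun _ hw => hw.mem_verts
  edges_finite := X.edges_finite.subset fun _ he => he.1
  edge_sub := fun _ he => he.2
  edge_nonempty := fun e he => X.edge_nonempty e he.1

theorem compOf_mem_comps {v : V} (hv : v ∈ X.verts) : compOf X v ∈ comps X :=
  ⟨⟨v, hv, rfl⟩, rfl⟩

theorem verts_subset_of_comps_subset (h : comps X ⊆ comps Y) : X.verts ⊆ Y.verts := by
  intro x hx
  obtain ⟨⟨v, _, hverts⟩, _⟩ := h (compOf_mem_comps hx)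
  have hxC : x ∈ (compOf X x).verts := ⟨hx, .refl⟩
  rw [hverts] at hxC
  exact hxC.mem_verts

theorem edges_subset_of_comps_subset (h : comps X ⊆ comps Y) : X.edges ⊆ Y.edges := by
  intro e he
  obtain ⟨v, hv⟩ := X.edge_nonempty e he
  have hvX : v ∈ X.verts := X.edge_sub e he hv
  have heC : e ∈ (compOf X v).edges := ⟨he, fun w hw => ⟨hvX, .single ⟨e, he, hv, hw⟩⟩⟩
  obtain ⟨_, hedges⟩ := h (compOf_mem_comps hvX)
  rw [hedges] at heC
  exact heC.1

theorem eq_of_comps_eq (h : comps X = comps Y) : X = Y :=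
  ext ((verts_subset_of_comps_subset h.le).antisymm (verts_subset_of_comps_subset h.ge))
    ((edges_subset_of_comps_subset h.le).antisymm (edges_subset_of_comps_subset h.ge))

theorem eq_null_of_comps_eq_empty (h : comps X = ∅) : X = Null :=
  eq_null_of_verts_eq_empty <| Set.subset_empty_iff.1 <|
    verts_subset_of_comps_subset (Y := Null) (h ▸ Set.empty_subset _)

theorem dDiff_verts_subset : (dDiff X Z).verts ⊆ X.verts := by
  unfold dDiff
  split_ifs with h
  · obtain ⟨_, hX⟩ := h.choose_spec
    conv_rhs => rw [hX]
    exact Set.subset_union_left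
  · exact le_rfl

theorem disjoint_dDiff_verts
    (h : ∃ W : FinHypergraph V, Disjoint W.verts Z.verts ∧ X = dSum W Z) :
    Disjoint (dDiff X Z).verts Z.verts := by
  rw [dDiff, dif_pos h]
  exact h.choose_spec.1

theorem dDiff_self_verts : (dDiff X X).verts = ∅ :=
  (disjoint_dDiff_verts ⟨Null, Set.empty_disjoint _, dSum_null_left.symm⟩).eq_bot_of_le
    dDiff_verts_subset

theorem bigSum_verts_of_finite {A : Set (FinHypergraph V)} (hA : A.Finite) :
    (bigSum A).verts = ⋃ X ∈ A, X.verts := by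
  rw [bigSum, dif_pos
    ⟨hA.biUnion fun X _ => X.verts_finite, hA.biUnion fun X _ => X.edges_finite⟩]

theorem self_mem_SXof {π : FinHypergraph V → FinHypergraph V}
    {D : FinHypergraph V → Set (FinHypergraph V)} (hX : X ∈ D X) : X ∈ SXof π D X :=
  ⟨hX, dDiff_self_verts ▸ Set.disjoint_empty _⟩

namespace IsMaximalSubsets

variable {dom S : Set (FinHypergraph V)} {D : FinHypergraph V → Set (FinHypergraph V)}

theorem self_mem (hmax : IsMaximalSubsets dom S D) (hXdom : X ∈ dom) (hXS : X ∈ S) :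
    X ∈ D X := by
  obtain ⟨-, -, -, hcomps, hcover⟩ := hmax X hXdom
  obtain ⟨T, hTD, hXT⟩ := hcover X hXS le_rfl
  rwa [eq_of_comps_eq ((hcomps T hTD).antisymm hXT)] at hTD

theorem eq_null_of_mem (hmax : IsMaximalSubsets dom S D) (hXdom : X ∈ dom) (hXD : X ∈ D X)
    {t : FinHypergraph V} (ht : t ∈ D X) (htX : t ≠ X) : t = Null := by
  obtain ⟨-, hpairwise, -, hcomps, -⟩ := hmax X hXdom
  have hdisj : comps t ∩ comps X = ∅ := hpairwise ht hXD htX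
  exact eq_null_of_comps_eq_empty (Set.inter_eq_left.2 (hcomps t ht) ▸ hdisj)

end IsMaximalSubsets

namespace IsHGT

variable {dom S : Set (FinHypergraph V)} {π : FinHypergraph V → FinHypergraph V}
  {D : FinHypergraph V → Set (FinHypergraph V)}

theorem map_verts_subset (hT : IsHGT dom π S D) (hXdom : X ∈ dom) (hfin : (SXof π D X).Finite)
    {t : FinHypergraph V} (ht : t ∈ SXof π D X) : (π t).verts ⊆ (π X).verts := by
  obtain ⟨-, -, hdecomp⟩ := hT.2.2.2 X hXdom
  rw [hdecomp]
  refine Set.subset_union_of_subset_right ?_ _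
  rw [bigSum_verts_of_finite (hfin.image π)]
  exact Set.subset_biUnion_of_mem (Set.mem_image_of_mem π ht)

theorem map_eq_null_of_self_mem_SXof (hT : IsHGT dom π S D) (hXdom : X ∈ dom)
    (hfin : (SXof π D X).Finite) (hX : X ∈ SXof π D X) {t : FinHypergraph V}
    (ht : t ∈ SXof π D X) (htX : t ≠ X) : π t = Null := by
  obtain ⟨hpairwise, hinj, -⟩ := hT.2.2.2 X hXdom
  have hdisj : Disjoint (π t).verts (π X).verts :=
    hpairwise (Set.mem_image_of_mem π ht) (Set.mem_image_of_mem π hX) (hinj.ne ht hX htX)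
  exact eq_null_of_verts_eq_empty (hdisj.eq_bot_of_le (hT.map_verts_subset hXdom hfin ht))

end IsHGT

end FinHypergraph

open FinHypergraph

theorem stmt7 {V : Type u} (dom S : Set (FinHypergraph V))
    (π : FinHypergraph V → FinHypergraph V) (D : FinHypergraph V → Set (FinHypergraph V))
    (hsub : S ⊆ dom) (hT : IsHGT dom π S D) :
    ∀ s ∈ S, SXof π D s = {s} := by
  intro s hs
  have hmax := hT.2.2.1
  have hsD : s ∈ D s := hmax.self_mem (hsub hs) hs
  have hsSX : s ∈ SXof π D s := self_mem_SXof hsD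
  have hother : ∀ t ∈ SXof π D s, t ≠ s → t = Null := fun t ht =>
    hmax.eq_null_of_mem (hsub hs) hsD ht.1
  refine Set.eq_singleton_iff_unique_mem.2 ⟨hsSX, fun t ht => by_contra fun hts => ?_⟩
  obtain rfl := hother t ht hts
  have hfin : (SXof π D s).Finite := (Set.toFinite {s, Null}).subset fun u hu =>
    or_iff_not_imp_left.2 (hother u hu)
  have hNullS : Null ∈ S := (hmax s (hsub hs)).1 ht.1
  exact hT.2.1 hNullS (hT.map_eq_null_of_self_mem_SXof (hsub hs) hfin hsSX ht hts)
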